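/- Let N ≥ 4 be an even integer and let x < 0. Then Σ_{k=0}^{N/2-1} (Γ(2k+1/2)/(2k)!) · F_k(x) = (√π/(N-2)!) · f^{(N-2)}(1), where f(ζ) := ζ^{-3/2} (2-ζ)^{-1} (1-ζx)^{-1/2} (a smooth function of ζ on a neighborhood of ζ = 1) and f^{(N-2)}(1) denotes its (N-2)-nd derivative at ζ = 1. Equivalently, the finite hypergeometric sum equals √π times the residue at ζ = 1 of ζ^{-3/2}(2-ζ)^{-1}(1-ζx)^{-1/2}/(ζ-1)^{N-1}. -/

import Mathlib

open Real Filter MeasureTheory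

/-- Modified Bessel function of the first kind (integer order), via its power series. -/
noncomputable def besselI (ν : ℕ) (x : ℝ) : ℝ :=
  ∑' k : ℕ, (x/2)^(2*k+ν) / ((Nat.factorial k : ℝ) * (Nat.factorial (k+ν) : ℝ))

/-- Analytic continuation of ₂F₁(1/2, 1/2; 1/2 - 2k; x) for x ≤ 0, via the
Pfaff-transformed finite sum. -/
noncomputable def Fhyp (k : ℕ) (x : ℝ) : ℝ :=
  (1-x)^(-(1/2:ℝ)) * ∑ s ∈ Finset.range (2*k+1),
    ((ascPochhammer ℝ s).eval (1/2:ℝ) * (ascPochhammer ℝ s).eval (-(2*(k:ℝ)))) /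
      ((ascPochhammer ℝ s).eval (1/2 - 2*(k:ℝ)) * (Nat.factorial s : ℝ)) * (x/(x-1))^s

/-- Forrester–Nagao formula for the expected number of real eigenvalues of the
N×N real elliptic Ginibre ensemble with non-Hermiticity parameter τ. -/
noncomputable def Eexp (N : ℕ) (τ : ℝ) : ℝ :=
  Real.sqrt ((2/Real.pi) * (1+τ)/(1-τ)) *
    ∑ k ∈ Finset.range (N/2),
      (Real.Gamma (2*(k:ℝ)+1/2) / (Nat.factorial (2*k) : ℝ)) * Fhyp k (-τ/(1-τ))

/-- Lemma (contour-integral/residue representation): for even N ≥ 4 and x < 0, the finite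
hypergeometric sum Σ_{k=0}^{N/2-1} (Γ(2k+1/2)/(2k)!) F_k(x) equals
(√π/(N-2)!)·f^{(N-2)}(1), where f(ζ) = ζ^{-3/2}(2-ζ)^{-1}(1-ζx)^{-1/2}; i.e. √π times the
residue at ζ = 1 of ζ^{-3/2}(2-ζ)^{-1}(1-ζx)^{-1/2}/(ζ-1)^{N-1}. -/

noncomputable def Poch (a : ℝ) (n : ℕ) : ℝ := (ascPochhammer ℝ n).eval a

lemma Poch_zero (a : ℝ) : Poch a 0 = 1 := by simp [Poch]

lemma Poch_succ (a : ℝ) (n : ℕ) : Poch a (n+1) = Poch a n * (a + n) := by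
  simp [Poch, ascPochhammer_succ_eval]

lemma Poch_pos {a : ℝ} (ha : 0 < a) (n : ℕ) : 0 < Poch a n := by
  induction n with
  | zero => simp [Poch_zero]
  | succ n ih => rw [Poch_succ]; positivity

lemma Gamma_add_nat (n : ℕ) : Real.Gamma (1/2 + n) = Poch (1/2) n * Real.Gamma (1/2) := by
  induction n with
  | zero => simp [Poch_zero]
  | succ n ih =>
      have : (1/2 : ℝ) + (n+1 : ℕ) = (1/2 + n) + 1 := by push_cast; ring
      rw [this, Real.Gamma_add_one (by positivity), ih, Poch_succ]; ring

lemma Poch_neg_nat (m s : ℕ) (h : s ≤ m) :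
    Poch (-(m:ℝ)) s * (Nat.factorial (m - s)) = (-1)^s * (Nat.factorial m) := by
  induction s with
  | zero => simp [Poch_zero]
  | succ s ih =>
      have hs : s ≤ m := le_of_lt (Nat.lt_of_succ_le h)
      have h1 : m - s = (m - (s+1)) + 1 := by omega
      have ih' := ih hs
      rw [h1, Nat.factorial_succ] at ih'
      rw [Poch_succ]
      have hcast : (-(m:ℝ) + s) = -(((m - (s+1) : ℕ) : ℝ) + 1) := by
        have : (m - (s+1) : ℕ) = m - s - 1 := by omega
        rw [this]
        push_cast [Nat.cast_sub hs, Nat.cast_sub (by omega : 1 ≤ m - s)]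
        ring
      calc Poch (-(m:ℝ)) s * (-(m:ℝ) + s) * (Nat.factorial (m - (s+1)))
          = -(Poch (-(m:ℝ)) s * ((((m - (s+1):ℕ)) + 1 : ℝ) * (Nat.factorial (m - (s+1))))) := by
            rw [hcast]; ring
        _ = -((-1)^s * (Nat.factorial m)) := by rw [← ih']; push_cast; ring
        _ = (-1)^(s+1) * (Nat.factorial m) := by ring

lemma Poch_half_sub (k s : ℕ) (h : s ≤ 2*k) :
    Poch (1/2 - 2*k) s * Poch (1/2) (2*k - s) = (-1)^s * Poch (1/2) (2*k) := by
  induction s with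
  | zero => simp [Poch_zero]
  | succ s ih =>
      have hs : s ≤ 2*k := le_of_lt (Nat.lt_of_succ_le h)
      have h1 : 2*k - s = (2*k - (s+1)) + 1 := by omega
      have ih' := ih hs
      rw [h1, Poch_succ] at ih'
      rw [Poch_succ]
      have hcast : ((1:ℝ)/2 - 2*k + s) = -((1/2 : ℝ) + ((2*k - (s+1) : ℕ) : ℝ)) := by
        rw [Nat.cast_sub h]; push_cast; ring
      calc Poch (1/2 - 2*(k:ℝ)) s * (1/2 - 2*(k:ℝ) + s) * Poch (1/2) (2*k - (s+1))
          = -(Poch (1/2 - 2*(k:ℝ)) s * (Poch (1/2) (2*k - (s+1)) * ((1:ℝ)/2 + ((2*k - (s+1) : ℕ) : ℝ)))) := by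
            rw [hcast]; ring
        _ = -((-1)^s * Poch (1/2) (2*k)) := by rw [← ih']
        _ = (-1)^(s+1) * Poch (1/2) (2*k) := by ring

lemma Poch_half_sub_ne (k s : ℕ) (h : s ≤ 2*k) : Poch (1/2 - 2*k) s ≠ 0 := by
  intro h0
  have := Poch_half_sub k s h
  rw [h0, zero_mul] at this
  have hp := Poch_pos (by norm_num : (0:ℝ) < 1/2) (2*k)
  have : (-1:ℝ)^s * Poch (1/2) (2*k) ≠ 0 := by positivity
  simp_all

lemma term_id (k s : ℕ) (h : s ≤ 2*k) :
    Real.Gamma (2*(k:ℝ)+1/2) / (Nat.factorial (2*k) : ℝ) *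
      (Poch (1/2) s * Poch (-(2*(k:ℝ))) s / (Poch (1/2 - 2*(k:ℝ)) s * (Nat.factorial s : ℝ)))
    = Real.sqrt Real.pi * (Poch (1/2) s / (Nat.factorial s : ℝ)) *
        (Poch (1/2) (2*k - s) / (Nat.factorial (2*k - s) : ℝ)) := by
  have hA : Poch (-((2*k:ℕ):ℝ)) s * (Nat.factorial (2*k - s)) = (-1)^s * (Nat.factorial (2*k)) :=
    Poch_neg_nat (2*k) s h
  have hB := Poch_half_sub k s h
  have hG : Real.Gamma (2*(k:ℝ)+1/2) = Poch (1/2) (2*k) * Real.sqrt Real.pi := by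
    have : (2*(k:ℝ)+1/2) = 1/2 + (2*k : ℕ) := by push_cast; ring
    rw [this, Gamma_add_nat, Real.Gamma_one_half_eq]
  have hcast : -((2*k:ℕ):ℝ) = -(2*(k:ℝ)) := by push_cast; ring
  rw [hcast] at hA
  have hcast2 : ((1:ℝ)/2 - ((2*k : ℕ)):ℝ) = 1/2 - 2*(k:ℝ) := by push_cast; ring
  have h1 : (Nat.factorial (2*k) : ℝ) ≠ 0 := Nat.cast_ne_zero.mpr (Nat.factorial_ne_zero _)
  have h2 : (Nat.factorial s : ℝ) ≠ 0 := Nat.cast_ne_zero.mpr (Nat.factorial_ne_zero _)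
  have h3 : (Nat.factorial (2*k - s) : ℝ) ≠ 0 := Nat.cast_ne_zero.mpr (Nat.factorial_ne_zero _)
  have h4 : Poch (1/2 - 2*(k:ℝ)) s ≠ 0 := Poch_half_sub_ne k s h
  rw [show Real.sqrt Real.pi * (Poch (1/2) s / (Nat.factorial s:ℝ)) *
        (Poch (1/2) (2*k-s) / (Nat.factorial (2*k-s):ℝ)) =
      (Real.sqrt Real.pi * Poch (1/2) s * Poch (1/2) (2*k-s)) /
        ((Nat.factorial s:ℝ) * (Nat.factorial (2*k-s):ℝ)) from by ring,
    div_mul_div_comm,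
    div_eq_div_iff (mul_ne_zero h1 (mul_ne_zero h4 h2)) (mul_ne_zero h2 h3)]
  linear_combination (Poch (1/2) s * Poch (-(2*(k:ℝ))) s * (Nat.factorial s : ℝ) *
      (Nat.factorial (2*k-s) : ℝ)) * hG
    + (Real.sqrt Real.pi * Poch (1/2) (2*k) * Poch (1/2) s * (Nat.factorial s : ℝ)) * hA
    - (Real.sqrt Real.pi * Poch (1/2) s * (Nat.factorial s : ℝ) * (Nat.factorial (2*k) : ℝ)) * hB

lemma derivFam_mul {S : Set ℝ} (hS : IsOpen S) (U V : ℕ → ℝ → ℝ)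
    (hU : ∀ n, ∀ ζ ∈ S, HasDerivAt (U n) (U (n+1) ζ) ζ)
    (hV : ∀ n, ∀ ζ ∈ S, HasDerivAt (V n) (V (n+1) ζ) ζ) :
    ∀ n, ∀ ζ ∈ S, HasDerivAt
      (fun t => ∑ i ∈ Finset.range (n+1), (n.choose i : ℝ) * (U i t * V (n-i) t))
      (∑ i ∈ Finset.range (n+2), ((n+1).choose i : ℝ) * (U i ζ * V (n+1-i) ζ)) ζ := by
  intro n ζ hζ
  have h : HasDerivAt
      (fun t => ∑ i ∈ Finset.range (n+1), (n.choose i : ℝ) * (U i t * V (n-i) t))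
      (∑ i ∈ Finset.range (n+1), (n.choose i : ℝ) *
        (U (i+1) ζ * V (n-i) ζ + U i ζ * V (n-i+1) ζ)) ζ := by
    apply HasDerivAt.fun_sum
    intro i _
    exact (((hU i ζ hζ).mul (hV (n-i) ζ hζ))).const_mul _
  convert h using 1
  rw [Finset.sum_choose_succ_mul (fun i j => U i ζ * V j ζ) n]
  rw [← Finset.sum_add_distrib]
  apply Finset.sum_congr rfl
  intro i hi
  have hi' : i ≤ n := Nat.lt_succ_iff.mp (Finset.mem_range.mp hi)
  have : n + 1 - i = (n - i) + 1 := by omega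
  rw [this]
  ring

lemma iteratedDeriv_of_fam {S : Set ℝ} (hS : IsOpen S) (W : ℕ → ℝ → ℝ)
    (hW : ∀ n, ∀ ζ ∈ S, HasDerivAt (W n) (W (n+1) ζ) ζ) :
    ∀ n, ∀ ζ ∈ S, iteratedDeriv n (W 0) ζ = W n ζ := by
  intro n
  induction n with
  | zero => intro ζ _; simp
  | succ n ih =>
      intro ζ hζ
      rw [iteratedDeriv_succ]
      have heq : iteratedDeriv n (W 0) =ᶠ[nhds ζ] W n :=
        Filter.eventuallyEq_of_mem (hS.mem_nhds hζ) (fun t ht => ih t ht)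
      rw [heq.deriv_eq]
      exact (hW n ζ hζ).deriv

noncomputable def G1 (n : ℕ) (ζ : ℝ) : ℝ := (-1)^n * Poch (3/2) n * ζ ^ (-(3/2) - n : ℝ)
noncomputable def G2 (n : ℕ) (ζ : ℝ) : ℝ := (Nat.factorial n : ℝ) * ((2-ζ)⁻¹)^(n+1)
noncomputable def G3 (x : ℝ) (n : ℕ) (ζ : ℝ) : ℝ :=
  Poch (1/2) n * x^n * (1-ζ*x) ^ (-(1/2) - n : ℝ)

lemma hG1 (n : ℕ) (ζ : ℝ) (hζ : ζ ∈ Set.Ioo (0:ℝ) 2) :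
    HasDerivAt (G1 n) (G1 (n+1) ζ) ζ := by
  have hne : ζ ≠ 0 := ne_of_gt hζ.1
  have h := (Real.hasDerivAt_rpow_const (p := (-(3/2) - n : ℝ)) (Or.inl hne)).const_mul
    ((-1)^n * Poch (3/2) n)
  refine h.congr_deriv ?_
  rw [G1, Poch_succ]
  have : (-(3/2) - (n:ℝ)) - 1 = -(3/2) - ((n+1 : ℕ) : ℝ) := by push_cast; ring
  rw [← this]
  push_cast
  ring

lemma hG2 (n : ℕ) (ζ : ℝ) (hζ : ζ ∈ Set.Ioo (0:ℝ) 2) :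
    HasDerivAt (G2 n) (G2 (n+1) ζ) ζ := by
  have hne : 2 - ζ ≠ 0 := ne_of_gt (by linarith [hζ.2])
  have h0 : HasDerivAt (fun t : ℝ => 2 - t) (-1) ζ := by
    simpa using (hasDerivAt_id ζ).const_sub 2
  have h1 : HasDerivAt (fun t : ℝ => (2-t)⁻¹) (1/(2-ζ)^2) ζ := by
    have := h0.inv hne
    refine this.congr_deriv ?_
    ring
  have h2 := (h1.pow (n+1)).const_mul ((Nat.factorial n : ℝ))
  refine h2.congr_deriv ?_
  rw [G2, Nat.factorial_succ]
  push_cast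
  rw [one_div, ← inv_pow]
  ring

lemma hG3 {x : ℝ} (hx : x < 0) (n : ℕ) (ζ : ℝ) (hζ : ζ ∈ Set.Ioo (0:ℝ) 2) :
    HasDerivAt (G3 x n) (G3 x (n+1) ζ) ζ := by
  have hpos : 0 < 1 - ζ*x := by nlinarith [hζ.1]
  have h0 : HasDerivAt (fun t : ℝ => 1 - t*x) (-x) ζ := by
    simpa using ((hasDerivAt_id ζ).mul_const x).const_sub 1
  have h1 : HasDerivAt (fun t : ℝ => (1-t*x) ^ (-(1/2) - n : ℝ))
      ((-(1/2) - n : ℝ) * (1-ζ*x) ^ ((-(1/2) - n : ℝ) - 1) * (-x)) ζ :=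
    by have := (Real.hasDerivAt_rpow_const (p := (-(1/2) - n : ℝ)) (Or.inl (ne_of_gt hpos))).comp ζ h0; exact this
  have h2 := h1.const_mul (Poch (1/2) n * x^n)
  refine h2.congr_deriv ?_
  rw [G3, Poch_succ]
  have : ((-(1/2) - (n:ℝ)) - 1) = -(1/2) - ((n+1 : ℕ) : ℝ) := by push_cast; ring
  rw [← this]
  push_cast
  ring

lemma Poch_succ_left (a : ℝ) (n : ℕ) : Poch a (n+1) = a * Poch (a+1) n := by
  simp [Poch, ascPochhammer_succ_left, Polynomial.eval_comp]

noncomputable def bb (m : ℕ) : ℝ := (-1)^m * Poch (3/2) m / (Nat.factorial m : ℝ)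
noncomputable def cc (m : ℕ) : ℝ := (-1)^m * Poch (1/2) m / (Nat.factorial m : ℝ)
noncomputable def aa (y : ℝ) (j : ℕ) : ℝ :=
  ∑ s ∈ Finset.range (j+1), cc s * bb (j-s) * y^s
noncomputable def AA (y : ℝ) : ℕ → ℝ
  | 0 => 0
  | (j+1) => aa y j
noncomputable def BB : ℕ → ℝ
  | 0 => 0
  | (m+1) => bb m

lemma cc_eq (m : ℕ) : cc m = bb m + BB m := by
  cases m with
  | zero => simp [cc, bb, BB, Poch_zero]
  | succ m =>
      have h1 : Poch (1/2) (m+1) = (1/2) * Poch (3/2) m := by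
        rw [Poch_succ_left]; norm_num
      have h2 : Poch (3/2) (m+1) = Poch (3/2) m * (3/2 + m) := Poch_succ _ _
      have hne : ((Nat.factorial (m+1)) : ℝ) ≠ 0 := Nat.cast_ne_zero.mpr (Nat.factorial_ne_zero _)
      have hne2 : ((Nat.factorial m) : ℝ) ≠ 0 := Nat.cast_ne_zero.mpr (Nat.factorial_ne_zero _)
      simp only [cc, bb, BB, h1, h2, Nat.factorial_succ]
      field_simp
      push_cast
      ring

lemma sumBB (y : ℝ) (m : ℕ) :
    ∑ s ∈ Finset.range (m+1), cc s * BB (m-s) * y^s = AA y m := by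
  cases m with
  | zero => simp [BB, AA]
  | succ m =>
      rw [Finset.sum_range_succ]
      have hlast : cc (m+1) * BB (m+1-(m+1)) * y^(m+1) = 0 := by
        rw [Nat.sub_self]; show cc (m+1) * 0 * y^(m+1) = 0; ring
      rw [hlast, add_zero]
      have : ∀ s ∈ Finset.range (m+1), cc s * BB (m+1-s) * y^s = cc s * bb (m-s) * y^s := by
        intro s hs
        have : m + 1 - s = (m - s) + 1 := by
          have := Finset.mem_range.mp hs; omega
        rw [this]; rfl
      rw [Finset.sum_congr rfl this]
      rfl

lemma perk (y : ℝ) (k : ℕ) :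
    ∑ s ∈ Finset.range (2*k+1),
      (Poch (1/2) s / (Nat.factorial s : ℝ)) * (Poch (1/2) (2*k-s) / (Nat.factorial (2*k-s) : ℝ)) * y^s
    = AA y (2*k) + AA y (2*k+1) := by
  have step1 : ∀ s ∈ Finset.range (2*k+1),
      (Poch (1/2) s / (Nat.factorial s : ℝ)) * (Poch (1/2) (2*k-s) / (Nat.factorial (2*k-s) : ℝ)) * y^s
      = cc s * cc (2*k-s) * y^s := by
    intro s hs
    have hsle : s ≤ 2*k := Nat.lt_succ_iff.mp (Finset.mem_range.mp hs)
    have hsign : ((-1:ℝ))^s * (-1)^(2*k-s) = 1 := by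
      rw [← pow_add]
      have : s + (2*k - s) = 2*k := by omega
      rw [this, pow_mul]
      norm_num
    simp only [cc]
    rw [show ((-1:ℝ))^s * Poch (1/2) s / (Nat.factorial s : ℝ) *
        ((-1)^(2*k-s) * Poch (1/2) (2*k-s) / (Nat.factorial (2*k-s) : ℝ)) * y^s
      = ((-1:ℝ)^s * (-1)^(2*k-s)) * (Poch (1/2) s / (Nat.factorial s : ℝ) *
        (Poch (1/2) (2*k-s) / (Nat.factorial (2*k-s) : ℝ)) * y^s) from by ring, hsign, one_mul]
  rw [Finset.sum_congr rfl step1]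
  have step2 : ∀ s, cc s * cc (2*k-s) * y^s
      = cc s * bb (2*k-s) * y^s + cc s * BB (2*k-s) * y^s := by
    intro s; rw [cc_eq (2*k-s)]; ring
  simp only [step2]
  rw [Finset.sum_add_distrib, sumBB]
  have : ∑ s ∈ Finset.range (2*k+1), cc s * bb (2*k-s) * y^s = aa y (2*k) := rfl
  rw [this]
  show aa y (2*k) + AA y (2*k) = AA y (2*k) + AA y (2*k+1)
  have : AA y (2*k+1) = aa y (2*k) := rfl
  rw [this]; ring

lemma pairsum (y : ℝ) (M : ℕ) :
    ∑ k ∈ Finset.range M, (AA y (2*k) + AA y (2*k+1)) = ∑ j ∈ Finset.range (2*M), AA y j := by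
  induction M with
  | zero => simp
  | succ M ih =>
      rw [Finset.sum_range_succ, ih]
      have : 2*(M+1) = (2*M + 1) + 1 := by omega
      rw [this, Finset.sum_range_succ, Finset.sum_range_succ]
      ring

section Eval
variable {x : ℝ} (hx : x < 0)

lemma hsplit (hx : x < 0) (m : ℕ) :
    (1-x) ^ (-(1/2) - (m:ℕ) : ℝ) = (1-x)^(-(1/2):ℝ) * ((1-x)⁻¹)^m := by
  have h1 : (0:ℝ) < 1 - x := by linarith
  rw [show (-(1/2) - (m:ℕ) : ℝ) = -(1/2) + (-(m:ℕ):ℝ) by ring, Real.rpow_add h1]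
  congr 1
  rw [Real.rpow_neg h1.le, Real.rpow_natCast, inv_pow]

lemma hxy (hx : x < 0) (m : ℕ) :
    x^m * ((1-x)⁻¹)^m = (-1)^m * (x/(x-1))^m := by
  rw [← mul_pow, ← neg_pow]
  congr 1
  have h1 : (1:ℝ) - x ≠ 0 := by intro h; linarith [h]
  have h2 : x - 1 ≠ 0 := by intro h; linarith [h]
  field_simp
  ring

lemma W13_val (hx : x < 0) (j : ℕ) :
    ∑ i ∈ Finset.range (j+1), (j.choose i : ℝ) * (G1 i 1 * G3 x (j-i) 1)
    = (Nat.factorial j : ℝ) * (1-x)^(-(1/2):ℝ) * aa (x/(x-1)) j := by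
  rw [aa, ← Finset.sum_range_reflect (fun s => cc s * bb (j-s) * (x/(x-1))^s) (j+1)]
  rw [Finset.mul_sum]
  apply Finset.sum_congr rfl
  intro i hi
  have hij : i ≤ j := Nat.lt_succ_iff.mp (Finset.mem_range.mp hi)
  have hrefl : j + 1 - 1 - i = j - i := by omega
  rw [hrefl]
  have hji : j - (j - i) = i := by omega
  rw [hji]
  have hfact : ((j.choose i : ℕ) : ℝ) * (Nat.factorial i : ℝ) * (Nat.factorial (j-i) : ℝ)
      = (Nat.factorial j : ℝ) := by
    rw [← Nat.cast_mul, ← Nat.cast_mul, Nat.choose_mul_factorial_mul_factorial hij]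
  have h1 : G1 i 1 = (-1)^i * Poch (3/2) i := by
    rw [G1, Real.one_rpow, mul_one]
  have h3 : G3 x (j-i) 1 = Poch (1/2) (j-i) * ((-1)^(j-i) * (x/(x-1))^(j-i)) *
      ((1-x)^(-(1/2):ℝ)) := by
    rw [G3, one_mul, hsplit hx, ← hxy hx]
    ring
  rw [h1, h3, cc, bb, Nat.cast_choose ℝ hij]
  ring

lemma deriv_side (hx : x < 0) (n : ℕ) :
    iteratedDeriv n (fun ζ : ℝ => ζ ^ (-(3/2):ℝ) * (2-ζ)⁻¹ * (1-ζ*x) ^ (-(1/2):ℝ)) 1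
    = (Nat.factorial n : ℝ) * (1-x)^(-(1/2):ℝ) * ∑ j ∈ Finset.range (n+1), aa (x/(x-1)) j := by
  have hS : IsOpen (Set.Ioo (0:ℝ) 2) := isOpen_Ioo
  have h1mem : (1:ℝ) ∈ Set.Ioo (0:ℝ) 2 := by norm_num
  set U : ℕ → ℝ → ℝ := fun m ζ => ∑ i ∈ Finset.range (m+1), (m.choose i : ℝ) * (G1 i ζ * G3 x (m-i) ζ) with hU
  have hUd : ∀ m, ∀ ζ ∈ Set.Ioo (0:ℝ) 2, HasDerivAt (U m) (U (m+1) ζ) ζ :=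
    derivFam_mul hS G1 (G3 x) hG1 (hG3 hx)
  set W : ℕ → ℝ → ℝ := fun m ζ => ∑ i ∈ Finset.range (m+1), (m.choose i : ℝ) * (U i ζ * G2 (m-i) ζ) with hW
  have hWd : ∀ m, ∀ ζ ∈ Set.Ioo (0:ℝ) 2, HasDerivAt (W m) (W (m+1) ζ) ζ :=
    derivFam_mul hS U G2 hUd hG2
  have hfeq : (fun ζ : ℝ => ζ ^ (-(3/2):ℝ) * (2-ζ)⁻¹ * (1-ζ*x) ^ (-(1/2):ℝ)) = W 0 := by
    funext t
    simp only [hW, hU, Finset.sum_range_one, Nat.choose_self, Nat.cast_one, G1, G2, G3,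
      Nat.sub_self, Nat.cast_zero, pow_zero, Nat.factorial_zero, zero_add, Nat.choose_self,
      Nat.cast_one, sub_zero]
    rw [Poch_zero, Poch_zero]
    norm_num
    ring
  rw [hfeq, iteratedDeriv_of_fam hS W hWd n 1 h1mem]
  simp only [hW]
  have hterm : ∀ i ∈ Finset.range (n+1), (n.choose i : ℝ) * (U i 1 * G2 (n-i) 1)
      = (Nat.factorial n : ℝ) * (1-x)^(-(1/2):ℝ) * aa (x/(x-1)) i := by
    intro i hi
    have hij : i ≤ n := Nat.lt_succ_iff.mp (Finset.mem_range.mp hi)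
    have hU1 : U i 1 = (Nat.factorial i : ℝ) * (1-x)^(-(1/2):ℝ) * aa (x/(x-1)) i := W13_val hx i
    have hG21 : G2 (n-i) 1 = (Nat.factorial (n-i) : ℝ) := by
      rw [G2]; norm_num
    rw [hU1, hG21]
    have hfact : ((n.choose i : ℕ) : ℝ) * (Nat.factorial i : ℝ) * (Nat.factorial (n-i) : ℝ)
        = (Nat.factorial n : ℝ) := by
      rw [← Nat.cast_mul, ← Nat.cast_mul, Nat.choose_mul_factorial_mul_factorial hij]
    linear_combination ((1-x)^(-(1/2):ℝ) * aa (x/(x-1)) i) * hfact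
  rw [Finset.sum_congr rfl hterm, ← Finset.mul_sum]

end Eval

lemma Poch_def (a : ℝ) (n : ℕ) : (ascPochhammer ℝ n).eval a = Poch a n := rfl


theorem hypergeometric_sum_residue (N : ℕ) (hN : 4 ≤ N) (hE : Even N) (x : ℝ) (hx : x < 0) :
    ∑ k ∈ Finset.range (N/2),
        (Real.Gamma (2*(k:ℝ)+1/2) / (Nat.factorial (2*k) : ℝ)) * Fhyp k x
      = Real.sqrt Real.pi / (Nat.factorial (N-2) : ℝ) *
        iteratedDeriv (N-2)
          (fun ζ : ℝ => ζ ^ (-(3/2):ℝ) * (2-ζ)⁻¹ * (1-ζ*x) ^ (-(1/2):ℝ)) 1 := by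
  obtain ⟨M', hM'⟩ := hE
  set M : ℕ := N/2 with hM
  have hNM : N = 2*M := by omega
  have hM2 : 2 ≤ M := by omega
  set y : ℝ := x/(x-1) with hy
  have hterm : ∀ k : ℕ, (Real.Gamma (2*(k:ℝ)+1/2) / (Nat.factorial (2*k) : ℝ)) * Fhyp k x
      = Real.sqrt Real.pi * (1-x)^(-(1/2):ℝ) * (AA y (2*k) + AA y (2*k+1)) := by
    intro k
    rw [Fhyp]
    rw [show (Real.Gamma (2*(k:ℝ)+1/2) / (Nat.factorial (2*k) : ℝ)) *
        ((1-x)^(-(1/2):ℝ) * ∑ s ∈ Finset.range (2*k+1),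
          ((ascPochhammer ℝ s).eval (1/2:ℝ) * (ascPochhammer ℝ s).eval (-(2*(k:ℝ)))) /
            ((ascPochhammer ℝ s).eval (1/2 - 2*(k:ℝ)) * (Nat.factorial s : ℝ)) * (x/(x-1))^s)
      = (1-x)^(-(1/2):ℝ) * ∑ s ∈ Finset.range (2*k+1),
          (Real.Gamma (2*(k:ℝ)+1/2) / (Nat.factorial (2*k) : ℝ) *
            (Poch (1/2) s * Poch (-(2*(k:ℝ))) s / (Poch (1/2 - 2*(k:ℝ)) s * (Nat.factorial s : ℝ))))
            * y^s from by
        simp only [Poch_def, Finset.mul_sum, ← hy]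
        exact Finset.sum_congr rfl fun i _ => by ring]
    have hss : ∀ s ∈ Finset.range (2*k+1),
        (Real.Gamma (2*(k:ℝ)+1/2) / (Nat.factorial (2*k) : ℝ) *
          (Poch (1/2) s * Poch (-(2*(k:ℝ))) s / (Poch (1/2 - 2*(k:ℝ)) s * (Nat.factorial s : ℝ)))) * y^s
        = Real.sqrt Real.pi * ((Poch (1/2) s / (Nat.factorial s : ℝ)) *
            (Poch (1/2) (2*k-s) / (Nat.factorial (2*k-s) : ℝ)) * y^s) := by
      intro s hs
      rw [term_id k s (Nat.lt_succ_iff.mp (Finset.mem_range.mp hs))]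
      ring
    rw [Finset.sum_congr rfl hss, ← Finset.mul_sum, perk y k]
    ring
  rw [Finset.sum_congr rfl (fun k _ => hterm k), ← Finset.mul_sum, pairsum]
  rw [show 2*M = (2*M-1)+1 by omega, Finset.sum_range_succ']
  have hAA0 : AA y 0 = 0 := rfl
  rw [hAA0, add_zero]
  have hAAsh : ∀ i, AA y (i+1) = aa y i := fun i => rfl
  simp only [hAAsh]
  rw [deriv_side hx (N-2)]
  have hfne : ((Nat.factorial (N-2)) : ℝ) ≠ 0 := Nat.cast_ne_zero.mpr (Nat.factorial_ne_zero _)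
  rw [show N-2+1 = 2*M-1 by omega]
  field_simp
  ring
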